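/- arXiv:1511.08784 — 5 statements merged into one kernel-verified Lean document; each statement's English description precedes it below -/
import Mathlib

section
/- Let a, b be coprime positive integers with a > b, a+b not a power of 2, and (a,b) ≠ (2,1). Then there exists a real constant c > 0 such that ω(a^n - b^n) > c·log(n) for infinitely many positive integers n. -/
/-!
Take `n = 2 ^ k`. For `i < k`, `a ^ 2 ^ i + b ^ 2 ^ i` divides `a ^ n - b ^ n`, and it is not a
power of two: a sum of two coprime squares is `≡ 1, 2 (mod 4)`, so it is a power of two only when
it is `1` or `2`. Hence it has an odd prime factor `qᵢ`. These primes are distinct, since an odd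
prime dividing `a ^ 2 ^ i + b ^ 2 ^ i` and `a ^ 2 ^ j + b ^ 2 ^ j` with `i < j` divides both
`a ^ 2 ^ j ± b ^ 2 ^ j`, hence `2`. So `ω(a ^ n - b ^ n) ≥ k = log₂ n`.
-/

theorem Nat.le_one_of_sq_add_sq_eq_two_pow {x y m : ℕ} (hxy : x.Coprime y)
    (h : x ^ 2 + y ^ 2 = 2 ^ m) : x ≤ 1 ∧ y ≤ 1 := by
  have sq_mod_four (z : ℕ) : z ^ 2 % 4 = 0 ∧ 2 ∣ z ∨ z ^ 2 % 4 = 1 := by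
    have hz : z % 4 < 4 := Nat.mod_lt _ (by norm_num)
    rw [Nat.pow_mod]
    interval_cases hr : z % 4 <;> omega
  have hm : m ≤ 1 := by
    by_contra! hm
    have h4 : 4 ∣ x ^ 2 + y ^ 2 := h ▸ (pow_dvd_pow 2 hm : 2 ^ 2 ∣ 2 ^ m)
    obtain ⟨hx, hy⟩ : 2 ∣ x ∧ 2 ∣ y := by
      rcases sq_mod_four x with hx | hx <;> rcases sq_mod_four y with hy | hy <;> omega
    exact Nat.not_coprime_of_dvd_of_dvd (by norm_num) hx hy hxy
  have : x ^ 2 + y ^ 2 ≤ 2 := h ▸ (Nat.pow_le_pow_right two_pos hm).trans_eq (pow_one 2)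
  constructor <;> nlinarith

theorem Nat.pow_two_pow_add_pow_two_pow_ne_two_pow {a b : ℕ} (hab : a.Coprime b)
    (hpow2 : ¬∃ m, a + b = 2 ^ m) (i : ℕ) : ¬∃ m, a ^ 2 ^ i + b ^ 2 ^ i = 2 ^ m := by
  rintro ⟨m, hm⟩
  cases i with
  | zero => exact hpow2 ⟨m, by simpa using hm⟩
  | succ i =>
    rw [pow_succ, pow_mul, pow_mul] at hm
    obtain ⟨ha, hb⟩ := Nat.le_one_of_sq_add_sq_eq_two_pow (hab.pow _ _) hm
    rw [Nat.pow_le_one_iff (by positivity)] at ha hb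
    interval_cases a <;> interval_cases b <;> simp_all

theorem pow_two_pow_add_dvd_pow_two_pow_sub {R : Type*} [CommRing R] (x y : R) {i j : ℕ}
    (hij : i < j) : x ^ 2 ^ i + y ^ 2 ^ i ∣ x ^ 2 ^ j - y ^ 2 ^ j := by
  obtain ⟨k, rfl⟩ := Nat.exists_eq_add_of_lt hij
  have hsucc : x ^ 2 ^ (i + 1) - y ^ 2 ^ (i + 1) =
      (x ^ 2 ^ i + y ^ 2 ^ i) * (x ^ 2 ^ i - y ^ 2 ^ i) := by
    rw [pow_succ, pow_mul, pow_mul, sq_sub_sq]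
  calc x ^ 2 ^ i + y ^ 2 ^ i ∣ x ^ 2 ^ (i + 1) - y ^ 2 ^ (i + 1) := hsucc ▸ dvd_mul_right _ _
    _ ∣ x ^ 2 ^ (i + k + 1) - y ^ 2 ^ (i + k + 1) := by
      rw [show i + k + 1 = i + 1 + k by ring, pow_add 2 (i + 1), pow_mul x, pow_mul y]
      exact sub_dvd_pow_sub_pow _ _ _

theorem not_dvd_pow_two_pow_add_of_lt {R : Type*} [CommRing R] {x y p : R} (hxy : IsCoprime x y)
    (hp : ¬p ∣ 2) {i j : ℕ} (hij : i < j) (hi : p ∣ x ^ 2 ^ i + y ^ 2 ^ i) :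
    ¬p ∣ x ^ 2 ^ j + y ^ 2 ^ j := by
  intro hj
  have hsub := hi.trans (pow_two_pow_add_dvd_pow_two_pow_sub x y hij)
  obtain ⟨u, v, huv⟩ := hxy.pow (m := 2 ^ j) (n := 2 ^ j)
  have htwo : (2 : R) =
      (u + v) * (x ^ 2 ^ j + y ^ 2 ^ j) + (u - v) * (x ^ 2 ^ j - y ^ 2 ^ j) := by
    linear_combination (-2 : R) * huv
  exact hp (htwo ▸ dvd_add (dvd_mul_of_dvd_right hj _) (dvd_mul_of_dvd_right hsub _))

theorem Nat.le_card_primeFactors_pow_two_pow_sub {a b : ℕ} (hab : b < a) (hcop : a.Coprime b)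
    (hpow2 : ¬∃ m, a + b = 2 ^ m) (k : ℕ) :
    k ≤ (a ^ 2 ^ k - b ^ 2 ^ k).primeFactors.card := by
  choose q hq_prime hq_dvd hq_odd using fun i ↦ (Nat.eq_two_pow_or_exists_odd_prime_and_dvd
    (a ^ 2 ^ i + b ^ 2 ^ i)).resolve_left (Nat.pow_two_pow_add_pow_two_pow_ne_two_pow hcop hpow2 i)
  have hq_dvd_int (i : ℕ) : (q i : ℤ) ∣ (a : ℤ) ^ 2 ^ i + (b : ℤ) ^ 2 ^ i := by
    exact_mod_cast hq_dvd i
  have hq_not_dvd_two (i : ℕ) : ¬(q i : ℤ) ∣ 2 := fun h ↦ by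
    have := (Nat.prime_dvd_prime_iff_eq (hq_prime i) Nat.prime_two).mp (by exact_mod_cast h)
    exact Nat.not_odd_iff_even.mpr even_two (this ▸ hq_odd i)
  have hq_inj : Function.Injective q := Function.Injective.of_lt_imp_ne fun i j hij heq ↦
    not_dvd_pow_two_pow_add_of_lt (Nat.isCoprime_iff_coprime.mpr hcop) (hq_not_dvd_two i) hij
      (hq_dvd_int i) (heq ▸ hq_dvd_int j)
  have hlt : b ^ 2 ^ k < a ^ 2 ^ k := Nat.pow_lt_pow_left hab (by positivity)
  have hq_mem : Set.MapsTo q (Finset.range k) (a ^ 2 ^ k - b ^ 2 ^ k).primeFactors := by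
    intro i hi
    refine Nat.mem_primeFactors.mpr ⟨hq_prime i, ?_, Nat.sub_ne_zero_of_lt hlt⟩
    have := (hq_dvd_int i).trans
      (pow_two_pow_add_dvd_pow_two_pow_sub (a : ℤ) b (Finset.mem_range.mp hi))
    exact Int.natCast_dvd_natCast.mp (by push_cast [Nat.cast_sub hlt.le]; exact this)
  simpa using Finset.card_le_card_of_injOn q hq_mem hq_inj.injOn

theorem omega_pow_sub_pow_gt_log_general
    (a b : ℕ) (hab : b < a) (hcop : Nat.Coprime a b)
    (hpow2 : ¬∃ m : ℕ, a + b = 2 ^ m) :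
    ∃ c : ℝ, 0 < c ∧
      ∀ N : ℕ, ∃ n : ℕ, N ≤ n ∧ 1 ≤ n ∧
        c * Real.log n < ((a ^ n - b ^ n).primeFactors.card : ℝ) := by
  refine ⟨1 / (2 * Real.log 2), by positivity,
    fun N ↦ ⟨2 ^ (N + 1), ?_, Nat.one_le_two_pow, ?_⟩⟩
  · exact (Nat.lt_two_pow_self (n := N + 1)).le.trans' N.le_succ
  · have hω := Nat.le_card_primeFactors_pow_two_pow_sub hab hcop hpow2 (N + 1)
    calc 1 / (2 * Real.log 2) * Real.log ((2 ^ (N + 1) : ℕ) : ℝ) = (N + 1 : ℝ) / 2 := by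
          rw [Nat.cast_pow, Real.log_pow, Nat.cast_ofNat]
          push_cast
          field_simp
      _ < N + 1 := by linarith
      _ ≤ _ := by exact_mod_cast hω

/-- For coprime positive integers `a > b` with `a+b` not a power
of `2` and `(a,b) ≠ (2,1)`, there is a real constant `c > 0` such that
`ω(a^n - b^n) > c · log n` for infinitely many positive integers `n`. -/
theorem omega_pow_sub_pow_gt_log
    (a b : ℕ) (hb : 0 < b) (hab : b < a) (hcop : Nat.Coprime a b)
    (hpow2 : ¬∃ m : ℕ, a + b = 2 ^ m) (hexc : ¬(a = 2 ∧ b = 1)) :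
    ∃ c : ℝ, 0 < c ∧
      ∀ N : ℕ, ∃ n : ℕ, N ≤ n ∧ 1 ≤ n ∧
        c * Real.log n < ((a ^ n - b ^ n).primeFactors.card : ℝ) :=
  omega_pow_sub_pow_gt_log_general a b hab hcop hpow2
end

section
/- Let c₁,…,c_k be positive rationals and x₁,…,x_k nonzero rationals. If the sequence n ↦ ω(c₁x₁^n + ⋯ + c_k x_k^n) is bounded, then |x₁| = |x₂| = ⋯ = |x_k|. -/
/-!
Squaring the `x i` and clearing denominators, `N ^ (n + 1) * ∑ i, c i * x i ^ (2 * n)` becomes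
`A n = ∑ i, e i * a i ^ n` with positive integers `e i`, `a i`, the `a i` not all equal, so
`ω (A n) ≤ ω N + M`. After dividing the `a i` by their gcd, `A` is strictly increasing
and no prime divides every `a i`. For such a prime `q`, `v_q (A n)` is constant along a
subprogression of any arithmetic progression: modulo a large power `q ^ K`, the terms with
`q ∣ a i` vanish once `n ≥ K`, and the others are periodic of period `φ (q ^ K)`.
Now let `P` be the set of prime factors of `A n`. By Fermat, each `p ∈ P` divides every
`A (n + j * φ (A n))`; on a subprogression of these where all `v_p`, `p ∈ P`, are constant, two
distinct terms of the increasing sequence `A` cannot both be `P`-smooth, so some term has a prime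
factor outside `P`. Hence `ω (A n)` is unbounded.
-/

/-- Number of distinct prime factors of a rational number `x/y` in lowest
terms (`y > 0`, `x ≠ 0`): `ω(x) + ω(y)`. -/
def ratOmega (q : ℚ) : ℕ :=
  q.num.natAbs.primeFactors.card + q.den.primeFactors.card

open Finset
open scoped Nat

theorem Nat.pow_add_mul_totient_modEq {b m : ℕ} (hb : b.Coprime m) (r t : ℕ) :
    b ^ (r + t * φ m) ≡ b ^ r [MOD m] := by
  simpa [pow_add, mul_comm t, pow_mul] using ((Nat.ModEq.pow_totient hb).pow t).mul_left (b ^ r)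

theorem Nat.pow_add_mul_sub_one_modEq {p b n : ℕ} (hp : p.Prime) (hn : n ≠ 0) (j : ℕ) :
    b ^ (n + j * (p - 1)) ≡ b ^ n [MOD p] := by
  by_cases hb : p ∣ b
  · exact (Nat.modEq_zero_iff_dvd.2 (dvd_pow hb (by omega))).trans
      (Nat.modEq_zero_iff_dvd.2 (dvd_pow hb hn)).symm
  · rw [← Nat.totient_prime hp]
    exact Nat.pow_add_mul_totient_modEq ((hp.coprime_iff_not_dvd).2 hb).symm n j

theorem Nat.factorization_eq_of_modEq {q A B K : ℕ} (hq : q.Prime) (h : A ≡ B [MOD q ^ K])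
    (hB : B ≠ 0) (hK : B.factorization q < K) : A.factorization q = B.factorization q := by
  have hdvd : ∀ i ≤ K, q ^ i ∣ A ↔ q ^ i ∣ B := fun i hi => h.dvd_iff (pow_dvd_pow q hi)
  have hA : A ≠ 0 := by
    rintro rfl
    have := (hq.pow_dvd_iff_le_factorization hB).1 ((hdvd K le_rfl).1 (dvd_zero _))
    omega
  apply le_antisymm
  · by_contra! hlt
    have := (hq.pow_dvd_iff_le_factorization hB).1
      ((hdvd _ hK).1 ((hq.pow_dvd_iff_le_factorization hA).2 hlt))
    omega
  · exact (hq.pow_dvd_iff_le_factorization hA).1 ((hdvd _ hK.le).2 (Nat.ordProj_dvd B q))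

theorem Nat.eq_of_primeFactors_subset_of_factorization_eq {A B : ℕ} {S : Finset ℕ}
    (hA : A ≠ 0) (hB : B ≠ 0) (hAS : A.primeFactors ⊆ S) (hBS : B.primeFactors ⊆ S)
    (h : ∀ q ∈ S, A.factorization q = B.factorization q) : A = B := by
  refine Nat.eq_of_factorization_eq hA hB fun p => ?_
  by_cases hp : p ∈ S
  · exact h p hp
  · rw [Finsupp.notMem_support_iff.1 (by rw [Nat.support_factorization]; exact fun h => hp (hAS h)),
      Finsupp.notMem_support_iff.1 (by rw [Nat.support_factorization]; exact fun h => hp (hBS h))]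

theorem exists_subprogression_forall_const {α : Type*} (S : Finset α) (F : α → ℕ → ℕ)
    (h : ∀ q ∈ S, ∀ r m, 0 < m → ∃ j₀ d, 0 < d ∧ ∃ c, ∀ j, F q (r + (j₀ + j * d) * m) = c)
    (r m : ℕ) (hm : 0 < m) :
    ∃ j₀ d, 0 < d ∧ ∀ q ∈ S, ∃ c, ∀ j, F q (r + (j₀ + j * d) * m) = c := by
  classical
  induction S using Finset.induction_on with
  | empty => exact ⟨0, 1, one_pos, by simp⟩
  | insert q S _ ih =>
    obtain ⟨j₀, d, hd, hS⟩ := ih fun p hp => h p (mem_insert_of_mem hp)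
    obtain ⟨j₁, d₁, hd₁, c, hc⟩ := h q (mem_insert_self q S) (r + j₀ * m) (d * m) (by positivity)
    refine ⟨j₀ + j₁ * d, d₁ * d, by positivity, fun p hp => ?_⟩
    rcases mem_insert.1 hp with rfl | hp
    · exact ⟨c, fun j => by rw [← hc j]; ring_nf⟩
    · obtain ⟨c, hc⟩ := hS p hp
      exact ⟨c, fun j => by rw [← hc (j₁ + j * d₁)]; ring_nf⟩

section WeightedPowerSum

variable {ι : Type*} [Fintype ι] (e a : ι → ℕ)

def weightedPowerSum (n : ℕ) : ℕ := ∑ i, e i * a i ^ n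

theorem weightedPowerSum_const_mul (g n : ℕ) :
    weightedPowerSum e (fun i => g * a i) n = g ^ n * weightedPowerSum e a n := by
  simp only [weightedPowerSum, mul_sum, mul_pow]
  exact sum_congr rfl fun i _ => by ring

theorem weightedPowerSum_strictMono (he : ∀ i, 0 < e i) (ha : ∀ i, 0 < a i)
    (h2 : ∃ i, 2 ≤ a i) : StrictMono (weightedPowerSum e a) := by
  refine strictMono_nat_of_lt_succ fun n => ?_
  obtain ⟨i, hi⟩ := h2
  refine sum_lt_sum (fun j _ => ?_) ⟨i, mem_univ i, ?_⟩
  · exact Nat.mul_le_mul_left _ (Nat.pow_le_pow_right (ha j) n.le_succ)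
  · exact Nat.mul_lt_mul_of_pos_left (Nat.pow_lt_pow_right hi n.lt_succ_self) (he i)

theorem dvd_weightedPowerSum_add_mul {p n L : ℕ} (hp : p.Prime) (hn : n ≠ 0) (hL : p - 1 ∣ L)
    (h : p ∣ weightedPowerSum e a n) (j : ℕ) : p ∣ weightedPowerSum e a (n + j * L) := by
  obtain ⟨w, rfl⟩ := hL
  have hmod : weightedPowerSum e a (n + j * w * (p - 1)) ≡ weightedPowerSum e a n [MOD p] :=
    Nat.ModEq.sum fun i _ => (Nat.pow_add_mul_sub_one_modEq hp hn (j * w)).mul_left (e i)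
  rw [show j * ((p - 1) * w) = j * w * (p - 1) by ring]
  exact (hmod.dvd_iff dvd_rfl).2 h

theorem factorization_weightedPowerSum_add_mul_totient {q r K t : ℕ} (hq : q.Prime)
    (hT : ∑ i with ¬ q ∣ a i, e i * a i ^ r ≠ 0)
    (hK : (∑ i with ¬ q ∣ a i, e i * a i ^ r).factorization q < K)
    (hKn : K ≤ r + t * φ (q ^ K)) :
    (weightedPowerSum e a (r + t * φ (q ^ K))).factorization q =
      (∑ i with ¬ q ∣ a i, e i * a i ^ r).factorization q := by
  refine Nat.factorization_eq_of_modEq hq ?_ hT hK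
  have hdvd : ∑ i with q ∣ a i, e i * a i ^ (r + t * φ (q ^ K)) ≡ 0 [MOD q ^ K] :=
    Nat.ModEq.sum_zero fun i hi => Nat.modEq_zero_iff_dvd.2 <|
      ((pow_dvd_pow q hKn).trans (pow_dvd_pow_of_dvd (mem_filter.1 hi).2 _)).mul_left _
  have hcop : ∑ i with ¬ q ∣ a i, e i * a i ^ (r + t * φ (q ^ K)) ≡
      ∑ i with ¬ q ∣ a i, e i * a i ^ r [MOD q ^ K] :=
    Nat.ModEq.sum fun i hi => (Nat.pow_add_mul_totient_modEq
      (((hq.coprime_iff_not_dvd).2 (mem_filter.1 hi).2).symm.pow_right K) r t).mul_left _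
  rw [weightedPowerSum, ← sum_filter_add_sum_filter_not univ (fun i => q ∣ a i)]
  simpa using hdvd.add hcop

theorem exists_subprogression_factorization_weightedPowerSum_const {q : ℕ} (hq : q.Prime)
    (he : ∀ i, 0 < e i) (hqa : ∃ i, ¬ q ∣ a i) (r m : ℕ) (hm : 0 < m) :
    ∃ j₀ d, 0 < d ∧ ∃ c, ∀ j,
      (weightedPowerSum e a (r + (j₀ + j * d) * m)).factorization q = c := by
  obtain ⟨i, hi⟩ := hqa
  set T := ∑ i with ¬ q ∣ a i, e i * a i ^ r
  have hai : 0 < a i := Nat.pos_of_ne_zero fun h => hi (h ▸ dvd_zero q)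
  have hT : T ≠ 0 := (sum_pos' (fun _ _ => Nat.zero_le _)
    ⟨i, mem_filter.2 ⟨mem_univ i, hi⟩, Nat.mul_pos (he i) (pow_pos hai r)⟩).ne'
  set K := T.factorization q + 1
  have hφ : 0 < φ (q ^ K) := Nat.totient_pos.2 (pow_pos hq.pos K)
  refine ⟨K * φ (q ^ K), φ (q ^ K), hφ, T.factorization q, fun j => ?_⟩
  rw [show r + (K * φ (q ^ K) + j * φ (q ^ K)) * m = r + (K + j) * m * φ (q ^ K) by ring]
  refine factorization_weightedPowerSum_add_mul_totient e a hq hT (Nat.lt_succ_self _) ?_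
  calc K ≤ (K + j) * (m * φ (q ^ K)) :=
        le_mul_of_le_of_one_le (Nat.le_add_right K j) (Nat.mul_pos hm hφ)
    _ ≤ _ := by rw [← mul_assoc]; exact Nat.le_add_left _ _

theorem exists_le_card_primeFactors_weightedPowerSum_of_forall_not_dvd (he : ∀ i, 0 < e i)
    (hcop : ∀ q, q.Prime → ∃ i, ¬ q ∣ a i) (hmono : StrictMono (weightedPowerSum e a))
    (t : ℕ) : ∃ n, 1 ≤ n ∧ t ≤ #(weightedPowerSum e a n).primeFactors := by
  induction t with
  | zero => exact ⟨1, le_rfl, Nat.zero_le _⟩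
  | succ t ih =>
    obtain ⟨n, hn, ht⟩ := ih
    have hne : ∀ n', n ≤ n' → weightedPowerSum e a n' ≠ 0 := fun n' hn' =>
      ((Nat.zero_le _).trans_lt (hmono (by omega : 0 < n'))).ne'
    set P := (weightedPowerSum e a n).primeFactors
    set L := φ (weightedPowerSum e a n)
    have hL : 0 < L := Nat.totient_pos.2 (Nat.pos_of_ne_zero (hne n le_rfl))
    have hP : ∀ j, P ⊆ (weightedPowerSum e a (n + j * L)).primeFactors := fun j p hp => by
      have hp' := Nat.prime_of_mem_primeFactors hp
      refine Nat.mem_primeFactors.2 ⟨hp', dvd_weightedPowerSum_add_mul e a hp' (by omega) ?_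
        (Nat.dvd_of_mem_primeFactors hp) j, hne _ (Nat.le_add_right _ _)⟩
      rw [← Nat.totient_prime hp']
      exact Nat.totient_dvd_of_dvd (Nat.dvd_of_mem_primeFactors hp)
    obtain ⟨j₀, d, hd, hconst⟩ := exists_subprogression_forall_const P
      (fun q n => (weightedPowerSum e a n).factorization q)
      (fun q hq => exists_subprogression_factorization_weightedPowerSum_const e a
        (Nat.prime_of_mem_primeFactors hq) he (hcop q (Nat.prime_of_mem_primeFactors hq)))
      n L hL
    have hnew : ∃ j, ¬ (weightedPowerSum e a (n + (j₀ + j * d) * L)).primeFactors ⊆ P := by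
      by_contra! hsub
      have hlt : n + (j₀ + 0 * d) * L < n + (j₀ + 1 * d) * L :=
        Nat.add_lt_add_left (Nat.mul_lt_mul_of_pos_right (by omega) hL) n
      refine (hmono hlt).ne
        (Nat.eq_of_primeFactors_subset_of_factorization_eq (hne _ (Nat.le_add_right _ _))
          (hne _ (Nat.le_add_right _ _)) (hsub 0) (hsub 1) fun q hq => ?_)
      obtain ⟨c, hc⟩ := hconst q hq
      exact (hc 0).trans (hc 1).symm
    obtain ⟨j, hj⟩ := hnew
    refine ⟨n + (j₀ + j * d) * L, hn.trans (Nat.le_add_right _ _), ?_⟩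
    calc t + 1 ≤ #P + 1 := by omega
      _ ≤ _ := card_lt_card ((hP _).ssubset_of_not_subset hj)

theorem exists_le_card_primeFactors_weightedPowerSum (he : ∀ i, 0 < e i) (ha : ∀ i, 0 < a i)
    {i j : ι} (hij : a i ≠ a j) (t : ℕ) :
    ∃ n, 1 ≤ n ∧ t ≤ #(weightedPowerSum e a n).primeFactors := by
  classical
  set g := univ.gcd a
  set b := fun i => a i / g
  have hab : a = fun i => g * b i :=
    funext fun i => (Nat.mul_div_cancel' (gcd_dvd (mem_univ i))).symm
  have hb : ∀ i, 0 < b i := fun i =>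
    Nat.pos_of_ne_zero fun h => (ha i).ne' (by rw [hab]; simp [h])
  have hcop : ∀ q, q.Prime → ∃ i, ¬ q ∣ b i := by
    intro q hq
    by_contra! h
    have := gcd_div_eq_one (mem_univ i) (ha i).ne' ▸ dvd_gcd fun i _ => h i
    exact hq.one_lt.ne' (Nat.dvd_one.1 this)
  have h2 : ∃ i, 2 ≤ b i := by
    by_contra! h
    exact hij (by rw [hab]; simp [show b i = 1 by grind, show b j = 1 by grind])
  obtain ⟨n, hn, ht⟩ := exists_le_card_primeFactors_weightedPowerSum_of_forall_not_dvd e b he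
    hcop (weightedPowerSum_strictMono e b he hb h2) t
  refine ⟨n, hn, ht.trans (card_le_card (Nat.primeFactors_mono ?_ ?_))⟩
  · rw [hab, weightedPowerSum_const_mul]
    exact dvd_mul_left _ _
  · exact (sum_pos' (fun _ _ => Nat.zero_le _)
      ⟨i, mem_univ i, Nat.mul_pos (he i) (pow_pos (ha i) n)⟩).ne'

end WeightedPowerSum

theorem exists_pos_nat_mul_eq_natCast {ι : Type*} [Fintype ι] (g : ι → ℚ) (hg : ∀ i, 0 < g i) :
    ∃ N : ℕ, 0 < N ∧ ∃ b : ι → ℕ, (∀ i, 0 < b i) ∧ ∀ i, (b i : ℚ) = N * g i := by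
  have hN : 0 < ∏ i, (g i).den := prod_pos fun i _ => (g i).pos
  have hb : ∀ i, ∃ b : ℕ, (b : ℚ) = (∏ i, (g i).den : ℕ) * g i := fun i => by
    obtain ⟨w, hw⟩ := dvd_prod_of_mem (fun i => (g i).den) (mem_univ i)
    refine ⟨(g i).num.natAbs * w, ?_⟩
    rw [hw]
    push_cast
    rw [Nat.cast_natAbs, Int.cast_abs, abs_of_nonneg (Int.cast_nonneg (Rat.num_nonneg.2 (hg i).le)),
      ← Rat.mul_den_eq_num]
    ring
  choose b hb using hb
  refine ⟨_, hN, b, fun i => ?_, hb⟩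
  exact_mod_cast (hb i) ▸ mul_pos (Nat.cast_pos.2 hN) (hg i)

theorem card_primeFactors_le_of_natCast_eq_mul {A N : ℕ} {s : ℚ} (h : (A : ℚ) = N * s) :
    #A.primeFactors ≤ #N.primeFactors + ratOmega s := by
  rcases eq_or_ne A 0 with rfl | hA
  · simp
  have hNs : (N : ℚ) * s ≠ 0 := h ▸ Nat.cast_ne_zero.2 hA
  have hint : A * s.den = N * s.num.natAbs := by
    have : (A : ℤ) * s.den = N * s.num := by
      exact_mod_cast (show (A : ℚ) * s.den = N * s.num by rw [h, mul_assoc, Rat.mul_den_eq_num])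
    simpa [Int.natAbs_mul] using congrArg Int.natAbs this
  calc #A.primeFactors ≤ #(A * s.den).primeFactors :=
        card_le_card (Nat.primeFactors_mono (dvd_mul_right _ _) (mul_ne_zero hA s.den_nz))
    _ = #(N.primeFactors ∪ s.num.natAbs.primeFactors) := by
        rw [hint, Nat.primeFactors_mul (by exact_mod_cast left_ne_zero_of_mul hNs)
          (by simpa using right_ne_zero_of_mul hNs)]
    _ ≤ #N.primeFactors + #s.num.natAbs.primeFactors := card_union_le _ _
    _ ≤ #N.primeFactors + ratOmega s := by unfold ratOmega; omega

/-- If `c₁,…,c_k` are positive rationals and `x₁,…,x_k` nonzero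
rationals, and the sequence `n ↦ ω(c₁x₁^n + ⋯ + c_k x_k^n)` is bounded (in
particular the sums are nonzero), then `|x₁| = ⋯ = |x_k|`. -/
theorem abs_eq_of_omega_bounded (k : ℕ) (c x : Fin k → ℚ)
    (hc : ∀ i, 0 < c i) (hx : ∀ i, x i ≠ 0)
    (hbd : ∃ M : ℕ, ∀ n : ℕ, 1 ≤ n →
      (∑ i, c i * x i ^ n) ≠ 0 ∧ ratOmega (∑ i, c i * x i ^ n) ≤ M) :
    ∀ i j, |x i| = |x j| := by
  intro i j
  by_contra hij
  obtain ⟨M, hM⟩ := hbd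
  obtain ⟨N, hN, b, hb₀, hb⟩ := exists_pos_nat_mul_eq_natCast (Sum.elim c fun i => x i ^ 2)
    (by rintro (i | i) <;> simp [hc i, pow_two_pos_of_ne_zero (hx i)])
  have hne : b (.inr i) ≠ b (.inr j) := fun h => hij <| (sq_eq_sq_iff_abs_eq_abs _ _).1 <| by
    simpa [hb, hN.ne'] using congrArg (Nat.cast : ℕ → ℚ) h
  have hsum : ∀ n, (weightedPowerSum (fun i => b (.inl i)) (fun i => b (.inr i)) n : ℚ) =
      ((N ^ (n + 1) : ℕ) : ℚ) * ∑ i, c i * x i ^ (2 * n) := fun n => by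
    simp only [weightedPowerSum, hb, Nat.cast_sum, Nat.cast_mul, Nat.cast_pow, Sum.elim_inl,
      Sum.elim_inr, mul_sum, pow_mul]
    exact sum_congr rfl fun i _ => by ring
  obtain ⟨n, hn, hlt⟩ := exists_le_card_primeFactors_weightedPowerSum _ _
    (fun i => hb₀ (.inl i)) (fun i => hb₀ (.inr i)) hne
    (#N.primeFactors + M + 1)
  have hle := card_primeFactors_le_of_natCast_eq_mul (hsum n)
  rw [Nat.primeFactors_pow_succ] at hle
  have := (hM (2 * n) (by omega)).2
  omega
end

section
/- Let c₁,…,c_k and x₁,…,x_k be positive integers. The sequence n ↦ ω(c₁x₁^n + ⋯ + c_k x_k^n) is bounded if and only if x₁ = x₂ = ⋯ = x_k. -/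
/-! Write `u n = ∑ c i * x i ^ n`. If the `x i` are not all equal, then for every finite set `T`
of primes some `u m` with `m > 0` has a prime factor outside `T`: once the gcd of the bases is
divided out, every `q ∈ T` misses some base, and for `m` a large multiple of all `φ (q ^ e)`,
Euler's theorem gives `u m ≡ ∑_{q ∤ x i} c i (mod q ^ e)`. This bounds every `q`-adic valuation
of `u m`, so `u m` would stay bounded, although it grows like `2 ^ m`.
Searching for the new prime along a progression `ρ + Λ t` with `p - 1 ∣ Λ` for all primes `p`
found so far, Fermat's little theorem keeps those primes dividing, so a single term acquires
arbitrarily many prime factors. -/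

open Finset

open scoped Nat

section PowSum

variable {ι : Type*} [Fintype ι] {A W : ι → ℕ}

def powSum (A W : ι → ℕ) (n : ℕ) : ℕ := ∑ i, A i * W i ^ n

theorem le_powSum (i : ι) (n : ℕ) : A i * W i ^ n ≤ powSum A W n :=
  single_le_sum (f := fun i => A i * W i ^ n) (fun _ _ => Nat.zero_le _) (mem_univ i)

theorem powSum_pos {i : ι} (hAi : 0 < A i) (hWi : 0 < W i) (n : ℕ) : 0 < powSum A W n :=
  (by positivity : 0 < A i * W i ^ n).trans_le (le_powSum i n)

theorem powSum_const_mul (g n : ℕ) :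
    powSum A (fun i => g * W i) n = g ^ n * powSum A W n := by
  simp only [powSum, mul_sum, mul_pow]
  exact sum_congr rfl fun i _ => by ring

theorem pow_modEq_ite_dvd {q e m : ℕ} (hq : q.Prime) (hem : e ≤ m) (hφ : φ (q ^ e) ∣ m)
    (w : ℕ) : w ^ m ≡ if q ∣ w then 0 else 1 [MOD q ^ e] := by
  split_ifs with hw
  · exact Nat.modEq_zero_iff_dvd.2 ((pow_dvd_pow_of_dvd hw e).trans (pow_dvd_pow w hem))
  · obtain ⟨t, rfl⟩ := hφ
    have hcop : w.Coprime (q ^ e) :=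
      (Nat.coprime_comm.1 (hq.coprime_iff_not_dvd.2 hw)).pow_right e
    simpa [pow_mul] using (Nat.ModEq.pow_totient hcop).pow t

theorem powSum_modEq_sum_not_dvd {q e m : ℕ} (hq : q.Prime) (hem : e ≤ m)
    (hφ : φ (q ^ e) ∣ m) : powSum A W m ≡ ∑ i with ¬ q ∣ W i, A i [MOD q ^ e] := by
  rw [sum_filter]
  refine Nat.ModEq.sum fun i _ => ?_
  simpa [apply_ite] using (pow_modEq_ite_dvd hq hem hφ (W i)).mul_left (A i)

theorem powSum_add_modEq {p ρ d : ℕ} (hp : p.Prime) (hρ : 0 < ρ) (hd : p - 1 ∣ d) :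
    powSum A W (ρ + d) ≡ powSum A W ρ [MOD p] := by
  refine Nat.ModEq.sum fun i _ => Nat.ModEq.mul_left _ ?_
  by_cases hw : p ∣ W i
  · have hdvd : ∀ k, 0 < k → p ∣ W i ^ k := fun k hk => dvd_pow hw hk.ne'
    exact (Nat.modEq_zero_iff_dvd.2 (hdvd _ (by omega))).trans
      (Nat.modEq_zero_iff_dvd.2 (hdvd _ hρ)).symm
  · obtain ⟨t, rfl⟩ := hd
    have hcop : (W i).Coprime p := Nat.coprime_comm.1 (hp.coprime_iff_not_dvd.2 hw)
    simpa [pow_add, pow_mul] using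
      ((Nat.ModEq.pow_card_sub_one_eq_one hp hcop).pow t).mul_left (W i ^ ρ)

theorem exists_prime_dvd_powSum_notMem_of_coprime {T : Finset ℕ} (hT : ∀ q ∈ T, q.Prime)
    (hA : ∀ i, 0 < A i) (hcop : ∀ q, q.Prime → ∃ i, ¬ q ∣ W i) (h2 : ∃ i, 2 ≤ W i) :
    ∃ m, 0 < m ∧ ∃ p, p.Prime ∧ p ∉ T ∧ p ∣ powSum A W m := by
  by_contra! hsub
  set S : ℕ → ℕ := fun q => ∑ i with ¬ q ∣ W i, A i
  set e : ℕ → ℕ := fun q => (S q).factorization q + 1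
  set B := ∏ q ∈ T, q ^ e q
  set m := B * ∏ q ∈ T, φ (q ^ e q)
  have hB : 0 < B := prod_pos fun q hq => pow_pos (hT q hq).pos _
  have hBm : B ≤ m := Nat.le_mul_of_pos_right _
    (prod_pos fun q hq => Nat.totient_pos.2 (pow_pos (hT q hq).pos _))
  have hS : ∀ q, q.Prime → S q ≠ 0 := fun q hq => by
    obtain ⟨i, hi⟩ := hcop q hq
    exact (sum_pos' (fun _ _ => Nat.zero_le _) ⟨i, mem_filter.2 ⟨mem_univ i, hi⟩, hA i⟩).ne'
  have hval : ∀ q ∈ T, ¬ q ^ e q ∣ powSum A W m := fun q hq hdvd => by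
    have hem : e q ≤ m :=
      ((Nat.lt_pow_self (hT q hq).one_lt).le.trans (single_le_prod' (fun p hp =>
        Nat.one_le_pow _ _ (hT p hp).pos) hq)).trans hBm
    have hφ : φ (q ^ e q) ∣ m := (dvd_prod_of_mem _ hq).mul_left B
    exact Nat.pow_succ_factorization_not_dvd (hS q (hT q hq)) (hT q hq)
      (((powSum_modEq_sum_not_dvd (hT q hq) hem hφ).dvd_iff dvd_rfl).1 hdvd)
  obtain ⟨i, hi⟩ := h2
  have hm : 0 < m := hB.trans_le hBm
  have hdvdB : powSum A W m ∣ B := by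
    refine (Nat.dvd_iff_prime_pow_dvd_dvd B _).2 fun p k hp hpk => ?_
    rcases Nat.eq_zero_or_pos k with rfl | hk
    · exact one_dvd _
    have hpT : p ∈ T := by
      by_contra hpT
      exact hsub m hm p hp hpT ((dvd_pow_self p hk.ne').trans hpk)
    have hke : k ≤ e p := by
      by_contra! hke
      exact hval p hpT ((pow_dvd_pow p hke.le).trans hpk)
    exact (pow_dvd_pow p hke).trans (dvd_prod_of_mem _ hpT)
  have hgrowth : 2 ^ m ≤ powSum A W m :=
    (Nat.pow_le_pow_left hi m).trans ((Nat.le_mul_of_pos_left _ (hA i)).trans (le_powSum i m))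
  have := Nat.lt_two_pow_self (n := m)
  have := Nat.le_of_dvd hB hdvdB
  omega

theorem exists_prime_dvd_powSum_notMem {T : Finset ℕ} (hT : ∀ q ∈ T, q.Prime)
    (hA : ∀ i, 0 < A i) (hW : ∀ i, 0 < W i) (hne : ∃ i j, W i ≠ W j) :
    ∃ m, 0 < m ∧ ∃ p, p.Prime ∧ p ∉ T ∧ p ∣ powSum A W m := by
  obtain ⟨i, j, hij⟩ := hne
  obtain ⟨W', hW', hgcd⟩ := extract_gcd W ⟨i, mem_univ i⟩
  set g := univ.gcd W
  have hcop : ∀ q, q.Prime → ∃ i, ¬ q ∣ W' i := by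
    intro q hq
    by_contra! hall
    exact hq.not_dvd_one (hgcd ▸ dvd_gcd fun i _ => hall i)
  have hW'pos : ∀ i, W' i ≠ 0 := fun i h => (hW i).ne' (by rw [hW' i (mem_univ i), h, mul_zero])
  have h2 : ∃ i, 2 ≤ W' i := by
    by_contra! hle
    have := hW'pos i; have := hW'pos j; have := hle i; have := hle j
    exact hij (by rw [hW' i (mem_univ i), hW' j (mem_univ j)]; congr 1; omega)
  obtain ⟨m, hm, p, hp, hpT, hpdvd⟩ := exists_prime_dvd_powSum_notMem_of_coprime hT hA hcop h2
  refine ⟨m, hm, p, hp, hpT, hpdvd.trans ?_⟩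
  have hWeq : W = fun i => g * W' i := funext fun i => hW' i (mem_univ i)
  rw [hWeq, powSum_const_mul]
  exact dvd_mul_left _ _

theorem exists_primes_dvd_powSum (hA : ∀ i, 0 < A i) (hW : ∀ i, 0 < W i)
    (hne : ∃ i j, W i ≠ W j) (M : ℕ) :
    ∃ ρ Λ : ℕ, 0 < ρ ∧ 0 < Λ ∧ ∃ Q : Finset ℕ, Q.card = M ∧
      ∀ p ∈ Q, p.Prime ∧ p ∣ powSum A W ρ ∧ p - 1 ∣ Λ := by
  induction M with
  | zero => exact ⟨1, 1, one_pos, one_pos, ∅, rfl, by simp⟩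
  | succ M ih =>
    obtain ⟨ρ, Λ, hρ, hΛ, Q, rfl, hQ⟩ := ih
    have hneΛ : ∃ i j, W i ^ Λ ≠ W j ^ Λ := by
      obtain ⟨i, j, h⟩ := hne
      exact ⟨i, j, fun h' => h (Nat.pow_left_injective hΛ.ne' h')⟩
    obtain ⟨t, -, p, hp, hpQ, hpdvd⟩ := exists_prime_dvd_powSum_notMem
      (A := fun i => A i * W i ^ ρ) (W := fun i => W i ^ Λ) (fun q hq => (hQ q hq).1)
      (fun i => Nat.mul_pos (hA i) (pow_pos (hW i) ρ)) (fun i => pow_pos (hW i) Λ) hneΛ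
    have hshift : powSum (fun i => A i * W i ^ ρ) (fun i => W i ^ Λ) t = powSum A W (ρ + Λ * t) :=
      sum_congr rfl fun i _ => by rw [pow_add, pow_mul, mul_assoc]
    refine ⟨ρ + Λ * t, Λ * (p - 1), by omega, Nat.mul_pos hΛ (Nat.sub_pos_of_lt hp.one_lt),
      insert p Q, card_insert_of_notMem hpQ, ?_⟩
    simp only [mem_insert, forall_eq_or_imp]
    refine ⟨⟨hp, hshift ▸ hpdvd, dvd_mul_left _ _⟩, fun q hq => ?_⟩
    obtain ⟨hq, hqdvd, hqΛ⟩ := hQ q hq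
    exact ⟨hq, ((powSum_add_modEq hq hρ (hqΛ.mul_right t)).dvd_iff dvd_rfl).2 hqdvd,
      hqΛ.mul_right _⟩

theorem exists_lt_card_primeFactors_powSum (hA : ∀ i, 0 < A i) (hW : ∀ i, 0 < W i)
    (hne : ∃ i j, W i ≠ W j) (M : ℕ) :
    ∃ n, 0 < n ∧ M < (powSum A W n).primeFactors.card := by
  obtain ⟨ρ, _, hρ, -, Q, hQcard, hQ⟩ := exists_primes_dvd_powSum hA hW hne (M + 1)
  obtain ⟨i, -⟩ := hne
  have hQsub : Q ⊆ (powSum A W ρ).primeFactors := fun p hp =>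
    Nat.mem_primeFactors.2 ⟨(hQ p hp).1, (hQ p hp).2.1, (powSum_pos (hA i) (hW i) ρ).ne'⟩
  exact ⟨ρ, hρ, hQcard.symm.trans_le (card_le_card hQsub)⟩

theorem primeFactors_powSum_of_forall_eq (h : ∀ i j, W i = W j) {n : ℕ} (hn : n ≠ 0) :
    (powSum A W n).primeFactors = (powSum A W 1).primeFactors := by
  cases isEmpty_or_nonempty ι with
  | inl _ => simp [powSum]
  | inr hι =>
    obtain ⟨i₀⟩ := hι
    have hconst : ∀ k, powSum A W k = (∑ i, A i) * W i₀ ^ k := fun k => by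
      simp only [powSum, sum_mul, h _ i₀]
    rw [hconst, hconst, pow_one]
    by_cases hA : ∑ i, A i = 0
    · simp [hA]
    by_cases hW : W i₀ = 0
    · simp [hW, hn]
    rw [Nat.primeFactors_mul hA (pow_ne_zero n hW), Nat.primeFactors_mul hA hW,
      Nat.primeFactors_pow _ hn]

end PowSum

/-- For positive integers `c₁,…,c_k, x₁,…,x_k`, the sequence
`n ↦ ω(c₁x₁^n + ⋯ + c_k x_k^n)` is bounded iff `x₁ = ⋯ = x_k`. -/
theorem omega_sum_pow_bounded_iff (k : ℕ) (c x : Fin k → ℕ)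
    (hc : ∀ i, 0 < c i) (hx : ∀ i, 0 < x i) :
    (∃ M : ℕ, ∀ n : ℕ, 1 ≤ n →
        (∑ i, c i * x i ^ n).primeFactors.card ≤ M) ↔ ∀ i j, x i = x j := by
  constructor
  · rintro ⟨M, hM⟩
    by_contra! hne
    obtain ⟨n, hn, hMn⟩ := exists_lt_card_primeFactors_powSum hc hx hne M
    exact (hM n hn).not_gt hMn
  · intro hall
    refine ⟨(powSum c x 1).primeFactors.card, fun n hn => ?_⟩
    exact (congrArg card (primeFactors_powSum_of_forall_eq hall (by omega))).le
end

section
/- Let x and y be positive integers with x ≠ y and gcd(x,y) = 1. Then the set of primes dividing x^n + y^n for some n ≥ 1 is infinite. -/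
namespace Nat

theorem Coprime.eq_two_of_dvd_pow_two_pow_add {x y p i j : ℕ} (hxy : x.Coprime y)
    (hp : p.Prime) (hij : i < j) (hi : p ∣ x ^ 2 ^ i + y ^ 2 ^ i)
    (hj : p ∣ x ^ 2 ^ j + y ^ 2 ^ j) : p = 2 := by
  have hdvd : p ∣ 2 * y ^ 2 ^ j := by
    have hiZ : (p : ℤ) ∣ x ^ 2 ^ i + y ^ 2 ^ i := by exact_mod_cast hi
    have hjZ : (p : ℤ) ∣ x ^ 2 ^ j + y ^ 2 ^ j := by exact_mod_cast hj
    have := hjZ.sub (hiZ.trans (pow_two_pow_add_dvd_pow_two_pow_sub (x : ℤ) y hij))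
    rw [add_sub_sub_cancel, ← two_mul] at this
    exact_mod_cast this
  rcases hp.dvd_mul.mp hdvd with h2 | hy
  · exact (prime_dvd_prime_iff_eq hp prime_two).mp h2
  · have hpy : p ∣ y := hp.dvd_of_dvd_pow hy
    have hpx : p ∣ x := hp.dvd_of_dvd_pow ((Nat.dvd_add_left hy).mp hj)
    exact absurd hxy (not_coprime_of_dvd_of_dvd hp.one_lt hpx hpy)

theorem two_dvd_of_four_dvd_sq_add_sq {x y : ℕ} (h : 4 ∣ x ^ 2 + y ^ 2) : 2 ∣ x ∧ 2 ∣ y := by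
  rw [dvd_iff_mod_eq_zero, add_mod, pow_mod, pow_mod y] at h
  have hx := mod_lt x (by norm_num : 0 < 4)
  have hy := mod_lt y (by norm_num : 0 < 4)
  interval_cases hx4 : x % 4 <;> interval_cases hy4 : y % 4 <;> norm_num at h <;> omega

theorem Coprime.exists_odd_prime_dvd_sq_add_sq {x y : ℕ} (hxy : x.Coprime y)
    (h : 2 < x ^ 2 + y ^ 2) : ∃ p, p.Prime ∧ p ∣ x ^ 2 + y ^ 2 ∧ Odd p := by
  refine (eq_two_pow_or_exists_odd_prime_and_dvd _).resolve_left ?_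
  rintro ⟨k, hk⟩
  rw [hk] at h
  have hk2 : 2 ≤ k := by
    by_contra! hk2
    interval_cases k <;> simp at h
  obtain ⟨hx, hy⟩ := two_dvd_of_four_dvd_sq_add_sq (hk ▸ pow_dvd_pow 2 hk2)
  exact not_coprime_of_dvd_of_dvd one_lt_two hx hy hxy

theorem two_lt_pow_add_pow {x y n : ℕ} (hx : 0 < x) (hy : 0 < y) (hne : x ≠ y) (hn : n ≠ 0) :
    2 < x ^ n + y ^ n := by
  have := one_le_pow n x hx
  have := one_le_pow n y hy
  rcases lt_or_gt_of_ne hne with h | h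
  · have := Nat.pow_lt_pow_left h hn; omega
  · have := Nat.pow_lt_pow_left h hn; omega

end Nat

/-- For coprime positive integers `x ≠ y`, infinitely many
primes divide `x^n + y^n` for some `n ≥ 1`. -/
theorem infinite_primes_dvd_pow_add_pow (x y : ℕ) (hx : 0 < x) (hy : 0 < y)
    (hne : x ≠ y) (hcop : Nat.Coprime x y) :
    {p : ℕ | p.Prime ∧ ∃ n : ℕ, 1 ≤ n ∧ p ∣ x ^ n + y ^ n}.Infinite := by
  have hfactor (k : ℕ) :
      ∃ p, p.Prime ∧ p ∣ x ^ 2 ^ (k + 1) + y ^ 2 ^ (k + 1) ∧ Odd p := by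
    have h := Nat.two_lt_pow_add_pow hx hy hne (pow_ne_zero (k + 1) two_ne_zero)
    rw [pow_succ, pow_mul, pow_mul] at h ⊢
    exact (Nat.Coprime.pow _ _ hcop).exists_odd_prime_dvd_sq_add_sq h
  choose p hp hdvd hodd using hfactor
  refine Set.infinite_of_injective_forall_mem (f := p)
    (Function.Injective.of_lt_imp_ne fun i j hij h => ?_)
    fun k => ⟨hp k, 2 ^ (k + 1), Nat.one_le_two_pow, hdvd k⟩
  exact (hodd i).ne_two_of_dvd_nat dvd_rfl
    (hcop.eq_two_of_dvd_pow_two_pow_add (hp i) (Nat.succ_lt_succ hij) (hdvd i) (h ▸ hdvd j))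
end

section
/- Let k ≥ 2, let c₁,…,c_k be nonzero integers, and x₁,…,x_k pairwise distinct integers with 2 ≤ x₁ < ⋯ < x_k and gcd(x₁,…,x_k) = 1. Suppose additionally that every nonempty subsum Σ_{i∈I} cᵢxᵢ^n is nonzero for all sufficiently large n. Then the sequence n ↦ ω(c₁x₁^n + ⋯ + c_k x_k^n) is unbounded. -/
/-!
Write `S(n) = ∑ cᵢ xᵢⁿ`. The largest base dominates, so `|S(n)| ≥ 2ⁿ⁻¹` for large `n`. Suppose
that along some arithmetic progression all prime factors of `S(n)` lay in a finite set `Q`. Then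
each such `S(n)` is divisible by `pᵉ` for some `p ∈ Q` with `e ≥ (n - 1)/G`, where `G` depends only
on `Q`. Colouring `n` by `p`, van der Waerden's theorem gives `k` terms `n₀ + j d` (`j < k`) with
the same `p` and `n₀` as large compared with `d` as we like. Inverting the Vandermonde system in
the `xᵢᵈ` shows that `pᵉ` divides `det · cᵢ` for an `i` with `p ∤ xᵢ` (such an `i` exists because
`gcd xᵢ = 1`), and the determinant is at most `(max xᵢ)^(d k²)`. So `e = O(d)`, which contradicts
`e ≥ (n₀ - 1)/G`.

Every progression therefore meets a new prime `q ∤ ∏ xᵢ`. By Fermat, `q ∣ S(n)` then holds on a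
whole subprogression with difference multiplied by `q - 1`. Iterating gives progressions on which
`S(n)` has as many prime factors as we like.
-/

open Finset Filter Topology Matrix

def powerSum {ι : Type*} [Fintype ι] (c x : ι → ℤ) (n : ℕ) : ℤ := ∑ i, c i * x i ^ n

theorem tendsto_sum_mul_pow_div_pow {ι : Type*} [Fintype ι] (c x : ι → ℝ) (K : ι)
    (hK : 0 < x K) (hx : ∀ i ≠ K, |x i| < x K) :
    Tendsto (fun n : ℕ => (∑ i, c i * x i ^ n) / x K ^ n) atTop (𝓝 (c K)) := by
  classical
  have hterm : ∀ i, Tendsto (fun n : ℕ => c i * (x i / x K) ^ n) atTop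
      (𝓝 (if i = K then c K else 0)) := by
    intro i
    split_ifs with hi
    · subst hi
      simp [div_self hK.ne']
    · have hlt : |x i / x K| < 1 := by
        rw [abs_div, abs_of_pos hK, div_lt_one hK]; exact hx i hi
      simpa using (tendsto_pow_atTop_nhds_zero_of_abs_lt_one hlt).const_mul (c i)
  have hsum := tendsto_finsetSum univ fun i _ => hterm i
  simp only [sum_ite_eq', mem_univ, if_true] at hsum
  refine hsum.congr fun n => ?_
  simp only [sum_div, mul_div_assoc, div_pow]

theorem eventually_two_pow_le_two_mul_natAbs_powerSum {ι : Type*} [Fintype ι] (c x : ι → ℤ)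
    (K : ι) (hcK : c K ≠ 0) (hK : 2 ≤ x K) (hx : ∀ i ≠ K, |x i| < x K) :
    ∀ᶠ n in atTop, 2 ^ n ≤ 2 * (powerSum c x n).natAbs := by
  have hK' : (0 : ℝ) < x K := by exact_mod_cast (by omega : (0 : ℤ) < x K)
  have hlim := tendsto_sum_mul_pow_div_pow (fun i => (c i : ℝ)) (fun i => (x i : ℝ)) K hK'
    (fun i hi => by exact_mod_cast hx i hi)
  have hcK' : (1 : ℝ) ≤ |(c K : ℝ)| := by exact_mod_cast Int.one_le_abs hcK
  filter_upwards [hlim.abs.eventually (lt_mem_nhds (by linarith : (1 / 2 : ℝ) < |(c K : ℝ)|))]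
    with n hn
  rw [abs_div, abs_of_pos (pow_pos hK' n), lt_div_iff₀ (pow_pos hK' n)] at hn
  have h2 : (2 : ℝ) ^ n ≤ (x K : ℝ) ^ n :=
    pow_le_pow_left₀ (by norm_num) (by exact_mod_cast hK) n
  have : (2 : ℝ) ^ n ≤ 2 * ((powerSum c x n).natAbs : ℝ) := by
    rw [Nat.cast_natAbs, Int.cast_abs]
    simp only [powerSum, Int.cast_sum, Int.cast_mul, Int.cast_pow]
    linarith
  exact_mod_cast this

theorem Nat.exists_mem_le_pow_factorization_pow_card {s : ℕ} {Q : Finset ℕ} (hs : 1 < s)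
    (hQ : s.primeFactors ⊆ Q) : ∃ p ∈ Q, s ≤ (p ^ s.factorization p) ^ #Q := by
  obtain ⟨p, hp, hmax⟩ := Q.exists_max_image (fun p => p ^ s.factorization p)
    ((Nat.nonempty_primeFactors.2 hs).mono hQ)
  refine ⟨p, hp, ?_⟩
  calc s = ∏ q ∈ Q, q ^ s.factorization q := by
        conv_lhs => rw [← Nat.prod_factorization_pow_eq_self (by omega : s ≠ 0)]
        exact Finsupp.prod_of_support_subset _ (by rwa [Nat.support_factorization])
          (fun q e => q ^ e) (fun _ _ => pow_zero _)
    _ ≤ (p ^ s.factorization p) ^ #Q := prod_le_pow_card _ _ _ hmax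

theorem Nat.exists_mem_pow_dvd_of_two_pow_le {s n G : ℕ} {Q : Finset ℕ} (hs : 1 < s)
    (hQ : s.primeFactors ⊆ Q) (hG : ∀ p ∈ Q, p * #Q ≤ G) (hn : 2 ^ n ≤ 2 * s) :
    ∃ p ∈ Q, p ^ ((n - 1) / G) ∣ s := by
  obtain ⟨p, hp, hle⟩ := exists_mem_le_pow_factorization_pow_card hs hQ
  set e := s.factorization p
  have hpow : 2 ^ n ≤ 2 ^ (G * e + 1) := calc
    2 ^ n ≤ 2 * (p ^ e) ^ #Q := hn.trans (by omega)
    _ ≤ 2 * (2 ^ p) ^ (e * #Q) := by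
        rw [← pow_mul]; gcongr; exact p.lt_two_pow_self.le
    _ = 2 ^ (p * #Q * e + 1) := by rw [← pow_mul, pow_succ, mul_comm]; ring
    _ ≤ 2 ^ (G * e + 1) := pow_le_pow_right₀ (by norm_num) (by gcongr; exact hG p hp)
  have hn' : n - 1 ≤ G * e := by
    have := (Nat.pow_le_pow_iff_right (by norm_num)).1 hpow; omega
  exact ⟨p, hp, (pow_dvd_pow p (Nat.div_le_of_le_mul hn')).trans (Nat.ordProj_dvd s p)⟩

theorem Nat.lt_mul_add_of_two_pow_le {E X m C : ℕ} (h : 2 ^ E ≤ X ^ m * C) :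
    E < X * m + C := by
  have : 2 ^ E < 2 ^ (X * m + C) := calc
    2 ^ E ≤ X ^ m * C := h
    _ < (2 ^ X) ^ m * 2 ^ C :=
        Nat.mul_lt_mul_of_le_of_lt (Nat.pow_le_pow_left X.lt_two_pow_self.le m)
          C.lt_two_pow_self (by positivity)
    _ = 2 ^ (X * m + C) := by rw [← pow_mul, ← pow_add]
  exact (Nat.pow_lt_pow_iff_right (by norm_num)).1 this

theorem Matrix.dvd_det_vandermonde_mul {R : Type*} [CommRing R] {m : ℕ} (v w : Fin m → R)
    {a : R}     (h : ∀ j : Fin m, a ∣ ∑ i, w i * v i ^ (j : ℕ)) (i : Fin m) :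
    a ∣ (vandermonde v).det * w i := by
  -- Cramer's rule: `det • w` is a combination of the entries of `w ᵥ* vandermonde v`.
  have hw : w ᵥ* vandermonde v ᵥ* adjugate (vandermonde v) = (vandermonde v).det • w := by
    rw [vecMul_vecMul, mul_adjugate, vecMul_smul, vecMul_one]
  rw [← smul_eq_mul, ← Pi.smul_apply, ← hw]
  simp only [vecMul, dotProduct, vandermonde_apply] at h ⊢
  exact dvd_sum fun j _ => (h j).mul_right _

theorem Matrix.abs_det_vandermonde_le {R : Type*} [CommRing R] [LinearOrder R]
    [IsStrictOrderedRing R] {m : ℕ} (v : Fin m → R) {B : R} (h0 : ∀ i, 0 ≤ v i)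
    (hB : ∀ i, v i ≤ B) (hB1 : 1 ≤ B) :
    |(vandermonde v).det| ≤ B ^ (m * m) := by
  rw [det_vandermonde, abs_prod]
  calc ∏ i, |∏ j ∈ Ioi i, (v j - v i)| ≤ ∏ _i : Fin m, B ^ m := by
        refine prod_le_prod (fun _ _ => abs_nonneg _) fun i _ => ?_
        rw [abs_prod]
        calc ∏ j ∈ Ioi i, |v j - v i| ≤ ∏ _j ∈ Ioi i, B :=
              prod_le_prod (fun _ _ => abs_nonneg _)
                fun j _ => abs_sub_le_of_nonneg_of_le (h0 j) (hB j) (h0 i) (hB i)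
          _ ≤ B ^ m := by
              rw [prod_const]
              exact pow_le_pow_right₀ hB1 ((card_le_univ _).trans_eq (Fintype.card_fin m))
    _ = B ^ (m * m) := by rw [prod_const, card_univ, Fintype.card_fin, ← pow_mul]

theorem powerSum_dvd_iff_of_modEq {ι : Type*} [Fintype ι] (c x : ι → ℤ) {p : ℕ}
    (hp : p.Prime) (hpx : ∀ i, ¬ (p : ℤ) ∣ x i) {a b : ℕ} (hab : a ≡ b [MOD p - 1]) :
    (p : ℤ) ∣ powerSum c x a ↔ (p : ℤ) ∣ powerSum c x b := by
  have := Fact.mk hp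
  have hx : ∀ i, (x i : ZMod p) ^ a = (x i : ZMod p) ^ b := fun i => by
    have hx0 : (x i : ZMod p) ≠ 0 := by rw [Ne, ZMod.intCast_zmod_eq_zero_iff_dvd]; exact hpx i
    have hfin : IsOfFinOrder (x i : ZMod p) := isOfFinOrder_iff_pow_eq_one.2
      ⟨p - 1, by have := hp.two_le; omega, ZMod.pow_card_sub_one_eq_one hx0⟩
    exact hfin.pow_eq_pow_iff_modEq.2 (hab.of_dvd (ZMod.orderOf_dvd_card_sub_one hx0))
  simp only [← ZMod.intCast_zmod_eq_zero_iff_dvd, powerSum, Int.cast_sum, Int.cast_mul,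
    Int.cast_pow, hx]

section

variable {k : ℕ} {c x : Fin k → ℤ}

theorem lt_of_forall_pow_dvd_powerSum_add_mul (hc : ∀ i, c i ≠ 0)
    (hx0 : ∀ i, 0 ≤ x i) (hinj : Function.Injective x) (hgcd : univ.gcd x = 1)
    {X C : ℕ} (hX : ∀ i, x i ≤ X) (hC : ∀ i, (c i).natAbs ≤ C)
    {q E n₀ d : ℕ} (hq : q.Prime) (hd : 0 < d)
    (hdvd : ∀ j < k, (q : ℤ) ^ E ∣ powerSum c x (n₀ + j * d)) :
    E < X * (d * (k * k)) + C := by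
  have hqZ : Prime (q : ℤ) := Nat.prime_iff_prime_int.mp hq
  obtain ⟨i₀, hi₀⟩ : ∃ i, ¬ (q : ℤ) ∣ x i := by
    by_contra! h
    have hdvd1 : (q : ℤ) ∣ univ.gcd x := dvd_gcd fun i _ => h i
    exact hqZ.not_dvd_one (hgcd ▸ hdvd1)
  set D := (vandermonde fun i => x i ^ d).det
  have hDc : (q : ℤ) ^ E ∣ D * c i₀ := by
    have hDw := dvd_det_vandermonde_mul (fun i => x i ^ d) (fun i => c i * x i ^ n₀)
      (fun j => (hdvd j j.2).trans (dvd_of_eq (sum_congr rfl fun i _ => by ring))) i₀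
    exact hqZ.pow_dvd_of_dvd_mul_right E (fun h => hi₀ (hqZ.dvd_of_dvd_pow h))
      (by rwa [← mul_assoc] at hDw)
  have hD0 : D ≠ 0 := det_vandermonde_ne_zero_iff.2 fun i j h =>
    hinj ((pow_left_inj₀ (hx0 i) (hx0 j) hd.ne').1 h)
  have hX1 : (1 : ℤ) ≤ X := by
    have : x i₀ ≠ 0 := fun h => hi₀ (h ▸ dvd_zero _)
    linarith [hX i₀, hx0 i₀, (hx0 i₀).lt_of_ne' this]
  have hD : D.natAbs ≤ X ^ (d * (k * k)) := by
    have := abs_det_vandermonde_le _ (fun i => pow_nonneg (hx0 i) d)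
      (fun i => pow_le_pow_left₀ (hx0 i) (hX i) d) (one_le_pow₀ hX1)
    rw [← pow_mul, ← Int.natCast_natAbs] at this
    exact_mod_cast this
  apply Nat.lt_mul_add_of_two_pow_le
  calc 2 ^ E ≤ q ^ E := Nat.pow_le_pow_left hq.two_le E
    _ ≤ (D * c i₀).natAbs :=
        Nat.le_of_dvd (Int.natAbs_pos.2 (mul_ne_zero hD0 (hc i₀)))
          (Int.natCast_dvd.1 (by exact_mod_cast hDc))
    _ = D.natAbs * (c i₀).natAbs := Int.natAbs_mul _ _
    _ ≤ X ^ (d * (k * k)) * C := Nat.mul_le_mul hD (hC i₀)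

theorem exists_forall_not_pow_dvd_powerSum (hc : ∀ i, c i ≠ 0)
    (hx0 : ∀ i, 0 ≤ x i) (hinj : Function.Injective x) (hgcd : univ.gcd x = 1)
    {Q : Finset ℕ} (hQ : ∀ p ∈ Q, p.Prime) {A L G : ℕ} (hL : 0 < L) (hG : 0 < G) :
    ∃ m, ∀ p ∈ Q, ¬ (p : ℤ) ^ ((A + m * L - 1) / G) ∣ powerSum c x (A + m * L) := by
  by_contra! h
  choose col hcolQ hcol using h
  obtain ⟨X, hX⟩ := Finite.exists_le fun i => (x i).toNat
  obtain ⟨C, hC⟩ := Finite.exists_le fun i => (c i).natAbs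
  -- Only the last `k` terms of a monochromatic progression of length `j₀ + k` are used, so that
  -- the first of them, `n₀`, is at least `j₀` times the difference `d = a * L`.
  set j₀ := G * (X * k * k + C + 1) with hj₀
  obtain ⟨a, ha, b, ⟨q, hqQ⟩, hcopy⟩ := Combinatorics.exists_mono_homothetic_copy
    (range (j₀ + k)) fun m => (⟨col m, hcolQ m⟩ : Q)
  set n₀ := A + (a * j₀ + b) * L with hn₀
  set E := (n₀ - 1) / G
  have hE : E < X * (a * L * (k * k)) + C := by
    refine lt_of_forall_pow_dvd_powerSum_add_mul hc hx0 hinj hgcd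
      (fun i => (Int.self_le_toNat _).trans (by exact_mod_cast hX i)) hC
      (n₀ := n₀) (hQ q hqQ) (Nat.mul_pos ha hL) fun j hj => ?_
    have hcolj : col (a * (j₀ + j) + b) = q := by
      simpa using congrArg Subtype.val (hcopy (j₀ + j) (by simp; omega))
    have hn : A + (a * (j₀ + j) + b) * L = n₀ + j * (a * L) := by ring
    have hdvd := hcol (a * (j₀ + j) + b)
    rw [hcolj, hn] at hdvd
    exact (pow_dvd_pow _ (Nat.div_le_div_right (by omega))).trans hdvd
  have hn₀E : n₀ ≤ G * (E + 1) := by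
    have : n₀ - 1 < G * (E + 1) := Nat.lt_mul_div_succ (n₀ - 1) hG
    omega
  have hj₀n₀ : G * ((X * k * k + C + 1) * (a * L)) ≤ n₀ := calc
    _ = a * j₀ * L := by rw [hj₀]; ring
    _ ≤ n₀ := by rw [hn₀]; nlinarith
  have hE' : (X * k * k + C + 1) * (a * L) ≤ E + 1 :=
    Nat.le_of_mul_le_mul_left (hj₀n₀.trans hn₀E) hG
  nlinarith [Nat.le_mul_of_pos_right C (Nat.mul_pos ha hL)]

theorem infinite_setOf_prime_dvd_powerSum (hc : ∀ i, c i ≠ 0)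
    (hx0 : ∀ i, 0 ≤ x i) (hinj : Function.Injective x) (hgcd : univ.gcd x = 1)
    (hgrowth : ∀ᶠ n in atTop, 2 ^ n ≤ 2 * (powerSum c x n).natAbs) {L : ℕ} (hL : 0 < L)
    (n₁ : ℕ) : {q : ℕ | q.Prime ∧ ∃ n, n ≡ n₁ [MOD L] ∧ (q : ℤ) ∣ powerSum c x n}.Infinite := by
  intro hfin
  set Q := hfin.toFinset
  obtain ⟨N, hN⟩ := eventually_atTop.1 hgrowth
  set A := n₁ + L * (N + 2)
  have hAN : N + 2 ≤ A := by have := Nat.le_mul_of_pos_left (N + 2) hL; omega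
  have hS : ∀ m, 1 < (powerSum c x (A + m * L)).natAbs := fun m => by
    have h1 := hN (A + m * L) (by omega)
    have h2 : 2 ^ 2 ≤ 2 ^ (A + m * L) := Nat.pow_le_pow_right (by norm_num) (by omega)
    omega
  have hQ : ∀ m, (powerSum c x (A + m * L)).natAbs.primeFactors ⊆ Q := fun m p hp => by
    rw [Set.Finite.mem_toFinset]
    refine ⟨Nat.prime_of_mem_primeFactors hp, A + m * L, ?_,
      Int.natCast_dvd.2 (Nat.dvd_of_mem_primeFactors hp)⟩
    simp [A, Nat.ModEq, Nat.add_mul_mod_self_left, Nat.add_mul_mod_self_right]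
  set G := #Q * Q.sup id
  have hG : 0 < G := by
    obtain ⟨p, hp⟩ := (Nat.nonempty_primeFactors.2 (hS 0)).mono (hQ 0)
    exact Nat.mul_pos (card_pos.2 ⟨p, hp⟩)
      ((hfin.mem_toFinset.1 hp).1.pos.trans_le (le_sup (f := id) hp))
  obtain ⟨m, hm⟩ := exists_forall_not_pow_dvd_powerSum hc hx0 hinj hgcd
    (fun p hp => (hfin.mem_toFinset.1 hp).1) (A := A) hL hG
  obtain ⟨p, hp, hdvd⟩ := Nat.exists_mem_pow_dvd_of_two_pow_le (hS m) (hQ m) (G := G)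
    (fun p hp => by rw [mul_comm]; exact Nat.mul_le_mul_left _ (le_sup (f := id) hp))
    (hN _ (by omega))
  exact hm p hp (by exact_mod_cast Int.natCast_dvd.2 hdvd)

theorem exists_primes_dvd_powerSum_of_modEq (hc : ∀ i, c i ≠ 0)
    (hx0 : ∀ i, 0 < x i) (hinj : Function.Injective x) (hgcd : univ.gcd x = 1)
    (hgrowth : ∀ᶠ n in atTop, 2 ^ n ≤ 2 * (powerSum c x n).natAbs) (m : ℕ) :
    ∃ P : Finset ℕ, #P = m ∧ (∀ p ∈ P, p.Prime) ∧ ∃ L n₀, 0 < L ∧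
      ∀ n, n ≡ n₀ [MOD L] → ∀ p ∈ P, (p : ℤ) ∣ powerSum c x n := by
  induction m with
  | zero => exact ⟨∅, rfl, by simp, 1, 0, one_pos, by simp⟩
  | succ m ih =>
    obtain ⟨P, hcard, hP, L, n₀, hL, hdvd⟩ := ih
    obtain ⟨q, ⟨hq, n₁, hn₁, hqn₁⟩, hqP⟩ :=
      (infinite_setOf_prime_dvd_powerSum hc (fun i => (hx0 i).le) hinj hgcd hgrowth hL n₀
        ).exists_notMem_finite (P ∪ (∏ i, x i).natAbs.primeFactors).finite_toSet
    simp only [coe_union, Set.mem_union, mem_coe, not_or] at hqP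
    have hqx : ∀ i, ¬ (q : ℤ) ∣ x i := fun i hqi => hqP.2 <| Nat.mem_primeFactors.2
      ⟨hq, Int.natCast_dvd.1 (hqi.trans (dvd_prod_of_mem x (mem_univ i))),
        Int.natAbs_ne_zero.2 (prod_ne_zero_iff.2 fun i _ => (hx0 i).ne')⟩
    refine ⟨insert q P, by rw [card_insert_of_notMem hqP.1, hcard], ?_, L * (q - 1), n₁,
      Nat.mul_pos hL (by have := hq.two_le; omega), fun n hn p hp => ?_⟩
    · intro p hp
      rcases mem_insert.1 hp with rfl | hp
      exacts [hq, hP p hp]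
    rcases mem_insert.1 hp with rfl | hp
    · exact (powerSum_dvd_iff_of_modEq c x hq hqx (Nat.ModEq.of_mul_left L hn)).2 hqn₁
    · exact hdvd n ((Nat.ModEq.of_mul_right (q - 1) hn).trans hn₁) p hp

end

theorem omega_sum_pow_unbounded_general (k : ℕ) (hk : 2 ≤ k)
    (c : Fin k → ℤ) (hc : ∀ i, c i ≠ 0)
    (x : Fin k → ℤ) (hx2 : ∀ i, 2 ≤ x i) (hmono : StrictMono x)
    (hgcd : Finset.univ.gcd x = 1) :
    ∀ M : ℕ, ∃ n : ℕ, 1 ≤ n ∧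
      M < (∑ i, c i * x i ^ n).natAbs.primeFactors.card := by
  intro M
  have hgrowth := eventually_two_pow_le_two_mul_natAbs_powerSum c x ⟨k - 1, by omega⟩ (hc _)
    (hx2 _) fun i hi => by
      rw [abs_of_nonneg (by linarith [hx2 i])]
      exact hmono (lt_of_le_of_ne (Fin.le_def.2 (by simp; omega)) hi)
  obtain ⟨P, hcard, hP, L, n₀, hL, hdvd⟩ := exists_primes_dvd_powerSum_of_modEq hc
    (fun i => by linarith [hx2 i]) hmono.injective hgcd hgrowth (M + 1)
  obtain ⟨N, hN⟩ := eventually_atTop.1 hgrowth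
  set n := n₀ + L * (N + 1)
  have hnN : N + 1 ≤ n := by have := Nat.le_mul_of_pos_left (N + 1) hL; omega
  have hS : powerSum c x n ≠ 0 := fun h => by
    have := hN n (by omega)
    simp [h] at this
  refine ⟨n, by omega, ?_⟩
  calc M < #P := by omega
    _ ≤ _ := card_le_card fun p hp => Nat.mem_primeFactors.2 ⟨hP p hp,
      Int.natCast_dvd.1 (hdvd n (by simp [n, Nat.ModEq]) p hp), Int.natAbs_ne_zero.2 hS⟩

/-- If `k ≥ 2`, `c₁,…,c_k` are nonzero integers,
`2 ≤ x₁ < ⋯ < x_k` with `gcd(x₁,…,x_k) = 1`, and every nonempty subsum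
`Σ_{i∈I} cᵢxᵢ^n` is nonzero for all large `n`, then
`n ↦ ω(c₁x₁^n + ⋯ + c_k x_k^n)` is unbounded. -/
theorem omega_sum_pow_unbounded (k : ℕ) (hk : 2 ≤ k)
    (c : Fin k → ℤ) (hc : ∀ i, c i ≠ 0)
    (x : Fin k → ℤ) (hx2 : ∀ i, 2 ≤ x i) (hmono : StrictMono x)
    (hgcd : Finset.univ.gcd x = 1)
    (hsub : ∀ I : Finset (Fin k), I.Nonempty →
      ∃ N : ℕ, ∀ n ≥ N, (∑ i ∈ I, c i * x i ^ n) ≠ 0) :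
    ∀ M : ℕ, ∃ n : ℕ, 1 ≤ n ∧
      M < (∑ i, c i * x i ^ n).natAbs.primeFactors.card :=
  omega_sum_pow_unbounded_general k hk c hc x hx2 hmono hgcd
end
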